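/- arXiv:math/0112059 — 3 statements merged into one kernel-verified Lean document; each statement's English description precedes it below -/
import Mathlib

section
/- Suppose additionally that a and d are invertible with inverses a⁻¹, d⁻¹ commuting appropriately (a·a⁻¹ = a⁻¹·a = 1, d·d⁻¹ = d⁻¹·d = 1). Define A' = a⁻¹ + a⁻¹βd⁻¹γa⁻¹, B' = −a⁻¹βd⁻¹, C' = −d⁻¹γa⁻¹, D' = d⁻¹ + d⁻¹γa⁻¹βd⁻¹. Then the matrix (A' B'; C' D') is a two-sided inverse of T = (a β; γ d), i.e. aA' + βC' = 1, aB' + βD' = 0, γA' + dC' = 0, γB' + dD' = 1, and the analogous left-inverse identities hold. -/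
/-!
For invertible `a`, `d` the eight identities are ring identities once one knows
`β d⁻¹ γ a⁻¹ β = 0` and `γ a⁻¹ β d⁻¹ γ = 0`: every other term cancels against `a a⁻¹ = 1`
or `d d⁻¹ = 1`. Both vanishings come from the `GL_{p,q}(1|1)` relations: `β` commutes up to a
scalar past `a⁻¹`, `d⁻¹` and `γ`, so `β u β` is a multiple of `u β² = 0` for every word `u` in
them; likewise `γ` passes `a⁻¹` and `d⁻¹`, and in `γ a⁻¹ β d⁻¹ γ` one first moves `β` to the end.
-/

def QCommute {K A : Type*} [CommSemiring K] [Semiring A] [Algebra K A] (c : K) (x u : A) :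
    Prop :=
  x * u = c • (u * x)

namespace QCommute

variable {K A : Type*} [CommSemiring K] [Semiring A] [Algebra K A] {c c' : K} {x u v : A}

theorem mul_right (h : QCommute c x u) (h' : QCommute c' x v) : QCommute (c * c') x (u * v) := by
  unfold QCommute at *
  rw [← mul_assoc, h, smul_mul_assoc, mul_assoc, h', mul_smul_comm, smul_smul, mul_assoc]

theorem inv_swap {a a' : A} (h : QCommute c a x) (ha : a * a' = 1) (ha' : a' * a = 1) :
    QCommute c x a' :=
  calc x * a' = a' * (a * x) * a' := by rw [← mul_assoc, ha', one_mul]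
    _ = c • (a' * x) := by
      rw [h, mul_smul_comm, smul_mul_assoc, mul_assoc, mul_assoc, ha, mul_one]

theorem mul_mul_self_eq_zero (h : QCommute c x u) (hx : x * x = 0) : x * u * x = 0 := by
  rw [h, smul_mul_assoc, mul_assoc, hx, mul_zero, smul_zero]

end QCommute

theorem block_inverse {R : Type*} [Ring R] {a β γ d ai di : R}
    (ha1 : a * ai = 1) (ha2 : ai * a = 1) (hd1 : d * di = 1) (hd2 : di * d = 1)
    (hβ : β * di * γ * ai * β = 0) (hγ : γ * ai * β * di * γ = 0) :
    let A' := ai + ai * β * di * γ * ai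
    let B' := -(ai * β * di)
    let C' := -(di * γ * ai)
    let D' := di + di * γ * ai * β * di
    a * A' + β * C' = 1 ∧ a * B' + β * D' = 0 ∧
    γ * A' + d * C' = 0 ∧ γ * B' + d * D' = 1 ∧
    A' * a + B' * γ = 1 ∧ A' * β + B' * d = 0 ∧
    C' * a + D' * γ = 0 ∧ C' * β + D' * d = 1 := by
  intro A' B' C' D'
  have hβ' : β * (di * (γ * (ai * β))) = 0 := by simpa only [mul_assoc] using hβ
  have hγ' : γ * (ai * (β * (di * γ))) = 0 := by simpa only [mul_assoc] using hγ
  refine ⟨?_, ?_, ?_, ?_, ?_, ?_, ?_, ?_⟩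
  iterate 4
    · simp only [A', B', C', D', mul_add, mul_neg, ← mul_assoc, ha1, hd1, one_mul, hβ, hγ,
        zero_mul]
      abel
  all_goals
    simp only [A', B', C', D', add_mul, neg_mul, mul_assoc, ha2, hd2, mul_one, hβ', hγ',
      mul_zero]
    abel

theorem gl_pq_antipode_inverse_general
    (K : Type*) [Field K] (A : Type*) [Ring A] [Algebra K A]
    (p q : K)
    (a β γ d ai di : A)
    (h1 : a * β = q • (β * a)) (h2 : d * β = q • (β * d))
    (h3 : a * γ = p • (γ * a)) (h4 : d * γ = p • (γ * d))
    (h5 : β * γ = -((p * q⁻¹) • (γ * β))) (h6 : β ^ 2 = 0) (h7 : γ ^ 2 = 0)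
    (ha1 : a * ai = 1) (ha2 : ai * a = 1)
    (hd1 : d * di = 1) (hd2 : di * d = 1) :
    let A' := ai + ai * β * di * γ * ai
    let B' := -(ai * β * di)
    let C' := -(di * γ * ai)
    let D' := di + di * γ * ai * β * di
    a * A' + β * C' = 1 ∧ a * B' + β * D' = 0 ∧
    γ * A' + d * C' = 0 ∧ γ * B' + d * D' = 1 ∧
    A' * a + B' * γ = 1 ∧ A' * β + B' * d = 0 ∧
    C' * a + D' * γ = 0 ∧ C' * β + D' * d = 1 := by
  have hβai : QCommute q β ai := QCommute.inv_swap h1 ha1 ha2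
  have hβdi : QCommute q β di := QCommute.inv_swap h2 hd1 hd2
  have hγai : QCommute p γ ai := QCommute.inv_swap h3 ha1 ha2
  have hγdi : QCommute p γ di := QCommute.inv_swap h4 hd1 hd2
  have hβγ : QCommute (-(p * q⁻¹)) β γ := by rw [QCommute, neg_smul]; exact h5
  have hββ : β * β = 0 := by rwa [sq] at h6
  have hγγ : γ * γ = 0 := by rwa [sq] at h7
  have hβ : β * di * γ * ai * β = 0 := by
    simpa only [mul_assoc] using
      ((hβdi.mul_right hβγ).mul_right hβai).mul_mul_self_eq_zero hββ
  have hγ : γ * ai * β * di * γ = 0 :=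
    calc γ * ai * β * di * γ = γ * ai * (β * (di * γ)) := by simp only [mul_assoc]
      _ = (q * -(p * q⁻¹)) • (γ * (ai * di) * γ * β) := by
        rw [hβdi.mul_right hβγ]; simp only [mul_smul_comm, mul_assoc]
      _ = 0 := by
        rw [(hγai.mul_right hγdi).mul_mul_self_eq_zero hγγ, zero_mul, smul_zero]
  exact block_inverse ha1 ha2 hd1 hd2 hβ hγ

theorem gl_pq_antipode_inverse
    (K : Type*) [Field K] (A : Type*) [Ring A] [Algebra K A]
    (p q : K) (hp : p ≠ 0) (hq : q ≠ 0)
    (a β γ d ai di : A)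
    (h1 : a * β = q • (β * a)) (h2 : d * β = q • (β * d))
    (h3 : a * γ = p • (γ * a)) (h4 : d * γ = p • (γ * d))
    (h5 : β * γ = -((p * q⁻¹) • (γ * β))) (h6 : β ^ 2 = 0) (h7 : γ ^ 2 = 0)
    (h8 : a * d = d * a + (p - q⁻¹) • (γ * β))
    (ha1 : a * ai = 1) (ha2 : ai * a = 1)
    (hd1 : d * di = 1) (hd2 : di * d = 1) :
    let A' := ai + ai * β * di * γ * ai
    let B' := -(ai * β * di)
    let C' := -(di * γ * ai)
    let D' := di + di * γ * ai * β * di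
    a * A' + β * C' = 1 ∧ a * B' + β * D' = 0 ∧
    γ * A' + d * C' = 0 ∧ γ * B' + d * D' = 1 ∧
    A' * a + B' * γ = 1 ∧ A' * β + B' * d = 0 ∧
    C' * a + D' * γ = 0 ∧ C' * β + D' * d = 1 :=
  gl_pq_antipode_inverse_general K A p q a β γ d ai di h1 h2 h3 h4 h5 h6 h7 ha1 ha2 hd1 hd2
end

section
/- With T invertible as above and A' = a⁻¹ + a⁻¹βd⁻¹γa⁻¹, the relation aA' = pq·A'a + (1 − pq)·1 holds. -/
/-! Multiplying out with `a a⁻¹ = 1`, both sides reduce to `β d⁻¹ γ a⁻¹ = pq • a⁻¹ β d⁻¹ γ`.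
Moving `γ` and `β` past `a⁻¹` costs the factors `p` and `q`, leaving the discrepancy
`β [d⁻¹, a⁻¹] γ`. Since `[a⁻¹, d⁻¹] = a⁻¹d⁻¹ [a, d] d⁻¹a⁻¹` and `[a, d]` is a multiple of `γβ`,
this discrepancy contains the factor `βγβ`, which vanishes because `β` skew-commutes with `γ`
and `β² = 0`. -/

section SkewCommute

variable {R A : Type*} [CommSemiring R]

section Semiring

variable [Semiring A] [Algebra R A]

theorem mul_inv_eq_smul_inv_mul_of_mul_eq_smul {c : R} {x xi y : A} (h : x * y = c • (y * x))
    (hx : x * xi = 1) (hx' : xi * x = 1) : y * xi = c • (xi * y) :=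
  calc y * xi = xi * (x * y) * xi := by rw [← mul_assoc, hx', one_mul]
    _ = c • (xi * y) := by rw [h, mul_smul_comm, smul_mul_assoc, mul_assoc, mul_assoc, hx, mul_one]

theorem mul_mul_eq_smul_of_mul_eq_smul {c c' : R} {x y z : A} (hy : x * y = c • (y * x))
    (hz : x * z = c' • (z * x)) : x * (y * z) = (c * c') • (y * z * x) := by
  rw [← mul_assoc, hy, smul_mul_assoc, mul_assoc, hz, mul_smul_comm, smul_smul, mul_assoc]

theorem mul_mul_self_eq_zero_of_mul_eq_smul {c : R} {x y : A} (h : x * y = c • (y * x))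
    (hx : x ^ 2 = 0) : x * y * x = 0 := by
  rw [h, smul_mul_assoc, mul_assoc, ← sq, hx, mul_zero, smul_zero]

end Semiring

variable [Ring A] [Algebra R A]

theorem mul_mul_mul_eq_of_commutator_eq {r c : R} {x y u v : A}
    (hxuv : x * (u * v) = c • (u * v * x)) (hxyx : x * y * x = 0)
    (huv : u * v - v * u = u * v * (r • (y * x)) * v * u) :
    x * (v * u) * y = x * (u * v) * y := by
  have hzero : x * (u * v) * (y * x) * (v * u * y) = 0 := by
    rw [hxuv, smul_mul_assoc, mul_assoc, ← mul_assoc x, hxyx, mul_zero, smul_zero, zero_mul]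
  rw [← sub_eq_zero, ← sub_mul, ← mul_sub, ← neg_sub, huv]
  simp only [mul_assoc] at hzero
  simp only [mul_neg, neg_mul, mul_smul_comm, smul_mul_assoc, mul_assoc, hzero, smul_zero,
    neg_zero]

end SkewCommute

theorem inv_mul_inv_sub_eq_of_mul_eq_one {A : Type*} [Ring A] {u ui v vi : A}
    (hu : u * ui = 1) (hu' : ui * u = 1) (hv : v * vi = 1) (hv' : vi * v = 1) :
    ui * vi - vi * ui = ui * vi * (u * v - v * u) * vi * ui := by
  simp only [mul_sub, sub_mul, mul_assoc]
  rw [← mul_assoc v vi, hv, one_mul, hu, mul_one, ← mul_assoc vi v, hv', one_mul,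
    ← mul_assoc ui u, hu', one_mul]

theorem gl_pq_aA_relation_general
    (K : Type*) [Field K] (A : Type*) [Ring A] [Algebra K A]
    (p q : K)
    (a β γ d ai di : A)
    (h1 : a * β = q • (β * a)) (h2 : d * β = q • (β * d))
    (h3 : a * γ = p • (γ * a))
    (h5 : β * γ = -((p * q⁻¹) • (γ * β))) (h6 : β ^ 2 = 0)
    (h8 : a * d = d * a + (p - q⁻¹) • (γ * β))
    (ha1 : a * ai = 1) (ha2 : ai * a = 1)
    (hd1 : d * di = 1) (hd2 : di * d = 1) :
    a * (ai + ai * β * di * γ * ai) =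
      (p * q) • ((ai + ai * β * di * γ * ai) * a) + (1 - p * q) • (1 : A) := by
  have hγa : γ * ai = p • (ai * γ) := mul_inv_eq_smul_inv_mul_of_mul_eq_smul h3 ha1 ha2
  have hβa : β * ai = q • (ai * β) := mul_inv_eq_smul_inv_mul_of_mul_eq_smul h1 ha1 ha2
  have hβd : β * di = q • (di * β) := mul_inv_eq_smul_inv_mul_of_mul_eq_smul h2 hd1 hd2
  have hcomm : β * (di * ai) * γ = β * (ai * di) * γ :=
    mul_mul_mul_eq_of_commutator_eq (mul_mul_eq_smul_of_mul_eq_smul hβa hβd)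
      (mul_mul_self_eq_zero_of_mul_eq_smul (h5.trans (neg_smul _ _).symm) h6)
      (by rw [inv_mul_inv_sub_eq_of_mul_eq_one ha1 ha2 hd1 hd2, h8, add_sub_cancel_left])
  have hcross : β * di * γ * ai = (p * q) • (ai * β * di * γ) :=
    calc β * di * γ * ai = p • (β * (di * ai) * γ) := by
          rw [mul_assoc _ γ, hγa, mul_smul_comm, mul_assoc β, mul_assoc β, ← mul_assoc di]
      _ = p • (β * (ai * di) * γ) := by rw [hcomm]
      _ = (p * q) • (ai * β * di * γ) := by
          rw [← mul_assoc β, hβa, smul_mul_assoc, smul_mul_assoc, smul_smul]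
  have hleft : a * (ai + ai * β * di * γ * ai) = 1 + β * di * γ * ai := by
    simp only [mul_add, ← mul_assoc, ha1, one_mul]
  have hright : (ai + ai * β * di * γ * ai) * a = 1 + ai * β * di * γ := by
    rw [add_mul, ha2, mul_assoc _ ai, ha2, mul_one]
  rw [hleft, hright, hcross]
  module

theorem gl_pq_aA_relation
    (K : Type*) [Field K] (A : Type*) [Ring A] [Algebra K A]
    (p q : K) (hp : p ≠ 0) (hq : q ≠ 0)
    (a β γ d ai di : A)
    (h1 : a * β = q • (β * a)) (h2 : d * β = q • (β * d))
    (h3 : a * γ = p • (γ * a)) (h4 : d * γ = p • (γ * d))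
    (h5 : β * γ = -((p * q⁻¹) • (γ * β))) (h6 : β ^ 2 = 0) (h7 : γ ^ 2 = 0)
    (h8 : a * d = d * a + (p - q⁻¹) • (γ * β))
    (ha1 : a * ai = 1) (ha2 : ai * a = 1)
    (hd1 : d * di = 1) (hd2 : di * d = 1)
    (hi1 : ai * β = q⁻¹ • (β * ai)) (hi2 : ai * γ = p⁻¹ • (γ * ai))
    (hi3 : di * β = q⁻¹ • (β * di)) (hi4 : di * γ = p⁻¹ • (γ * di)) :
    a * (ai + ai * β * di * γ * ai) =
      (p * q) • ((ai + ai * β * di * γ * ai) * a) + (1 - p * q) • (1 : A) :=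
  gl_pq_aA_relation_general K A p q a β γ d ai di h1 h2 h3 h5 h6 h8 ha1 ha2 hd1 hd2
end

section
/- The matrix R̂ = ![![q,0,0,0], ![0, q−p⁻¹, 1, 0], ![0, qp⁻¹, 0, 0], ![0,0,0,−p⁻¹]] satisfies the braid (graded Yang–Baxter) equation (R̂⊗I)(I⊗R̂)(R̂⊗I) = (I⊗R̂)(R̂⊗I)(I⊗R̂) as 8×8 matrices, where I is the 2×2 identity and ⊗ is the Kronecker product. -/
open Matrix Kronecker

/-! The matrix is the member `x = q`, `y = -p⁻¹` of a two-parameter family of Hecke-type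
braid matrices: its middle block has trace `x + y` and determinant `x * y`, so `R̂` satisfies
`(R̂ - x)(R̂ - y) = 0`, and the diagonal corners may be either eigenvalue. The braid relation for
the whole family is a polynomial identity, checked entrywise on `Fin 8`. -/

section Braid

variable {α : Type*} [CommRing α]

def tensorId (R : Matrix (Fin 4) (Fin 4) α) : Matrix (Fin 8) (Fin 8) α :=
  reindex finProdFinEquiv finProdFinEquiv (R ⊗ₖ (1 : Matrix (Fin 2) (Fin 2) α))

def idTensor (R : Matrix (Fin 4) (Fin 4) α) : Matrix (Fin 8) (Fin 8) α :=
  reindex finProdFinEquiv finProdFinEquiv ((1 : Matrix (Fin 2) (Fin 2) α) ⊗ₖ R)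

def heckeR (x y w z : α) : Matrix (Fin 4) (Fin 4) α :=
  !![w, 0, 0, 0; 0, x + y, 1, 0; 0, -(x * y), 0, 0; 0, 0, 0, z]

set_option maxHeartbeats 400000 in
theorem heckeR_braid (x y w z : α) (hw : w = x ∨ w = y) (hz : z = x ∨ z = y) :
    tensorId (heckeR x y w z) * idTensor (heckeR x y w z) * tensorId (heckeR x y w z) =
      idTensor (heckeR x y w z) * tensorId (heckeR x y w z) * idTensor (heckeR x y w z) := by
  ext i j
  fin_cases i <;> fin_cases j <;>
    simp [tensorId, idTensor, heckeR, mul_apply, Fin.sum_univ_eight, finProdFinEquiv,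
      Fin.divNat, Fin.modNat, one_apply] <;>
    rcases hw with rfl | rfl <;> rcases hz with rfl | rfl <;> ring

end Braid

theorem Rhat_braid_general
    (K : Type*) [Field K] (p q : K) :
    let R : Matrix (Fin 4) (Fin 4) K :=
      ![![q, 0, 0, 0], ![0, q - p⁻¹, 1, 0], ![0, q * p⁻¹, 0, 0], ![0, 0, 0, -p⁻¹]]
    let I2 : Matrix (Fin 2) (Fin 2) K := 1
    let R12 : Matrix (Fin 8) (Fin 8) K :=
      Matrix.reindex finProdFinEquiv finProdFinEquiv (R ⊗ₖ I2)
    let R23 : Matrix (Fin 8) (Fin 8) K :=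
      Matrix.reindex finProdFinEquiv finProdFinEquiv (I2 ⊗ₖ R)
    R12 * R23 * R12 = R23 * R12 * R23 := by
  intro R I2 R12 R23
  have hR : R = heckeR q (-p⁻¹) q (-p⁻¹) := by
    ext i j
    fin_cases i <;> fin_cases j <;> simp [R, heckeR, sub_eq_add_neg]
  change tensorId R * idTensor R * tensorId R = idTensor R * tensorId R * idTensor R
  rw [hR]
  exact heckeR_braid _ _ _ _ (.inl rfl) (.inr rfl)

theorem Rhat_braid
    (K : Type*) [Field K] (p q : K) (hp : p ≠ 0) (hq : q ≠ 0) :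
    let R : Matrix (Fin 4) (Fin 4) K :=
      ![![q, 0, 0, 0], ![0, q - p⁻¹, 1, 0], ![0, q * p⁻¹, 0, 0], ![0, 0, 0, -p⁻¹]]
    let I2 : Matrix (Fin 2) (Fin 2) K := 1
    let R12 : Matrix (Fin 8) (Fin 8) K :=
      Matrix.reindex finProdFinEquiv finProdFinEquiv (R ⊗ₖ I2)
    let R23 : Matrix (Fin 8) (Fin 8) K :=
      Matrix.reindex finProdFinEquiv finProdFinEquiv (I2 ⊗ₖ R)
    R12 * R23 * R12 = R23 * R12 * R23 :=
  Rhat_braid_general K p q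
end
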